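/- Let D be a closed axis-parallel square in ℝ² and let a, b ∈ D. Then there exists a point c ∈ D such that |c₁ − a₁| = |c₂ − a₂| and |c₁ − b₁| = |c₂ − b₂|; that is, c lies on a line of slope ±1 through a and on a line of slope ±1 through b. -/
import Mathlib


/-- The closed axis-parallel square with lower-left corner `(x, y)` and side length
`ℓ`. -/
def square (x y ℓ : ℝ) : Set (ℝ × ℝ) := Set.Icc x (x + ℓ) ×ˢ Set.Icc y (y + ℓ)

/-- Let `D` be a closed axis-parallel square and `a, b ∈ D`. Then there is a point
`c ∈ D` lying on a line of slope `±1` through `a` and on a line of slope `±1`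
through `b`. -/
theorem stmt11 (x y ℓ : ℝ) (hℓ : 0 < ℓ) (a b : ℝ × ℝ)
    (ha : a ∈ square x y ℓ) (hb : b ∈ square x y ℓ) :
    ∃ c ∈ square x y ℓ, |c.1 - a.1| = |c.2 - a.2| ∧ |c.1 - b.1| = |c.2 - b.2| := by
  simp only [square, Set.mem_prod, Set.mem_Icc] at ha hb
  obtain ⟨⟨ha1, ha2⟩, ha3, ha4⟩ := ha
  obtain ⟨⟨hb1, hb2⟩, hb3, hb4⟩ := hb
  by_cases h : |a.1 - a.2 - x + y| ≤ b.1 + b.2 - x - y ∧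
      |a.1 - a.2 - x + y| ≤ x + y + 2*ℓ - (b.1 + b.2)
  · refine ⟨((b.1 + b.2 + a.1 - a.2)/2, (b.1 + b.2 - a.1 + a.2)/2), ?_, ?_, ?_⟩
    · simp only [square, Set.mem_prod, Set.mem_Icc]
      obtain ⟨h1, h2⟩ := h
      rcases abs_cases (a.1 - a.2 - x + y) with ⟨he, _⟩ | ⟨he, _⟩ <;>
        exact ⟨⟨by linarith, by linarith⟩, by linarith, by linarith⟩
    · congr 1; ring
    · rw [show (b.1 + b.2 - a.1 + a.2)/2 - b.2 =
        -((b.1 + b.2 + a.1 - a.2)/2 - b.1) by ring, abs_neg]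
  · rw [not_and_or, not_le, not_le] at h
    refine ⟨((a.1 + a.2 + b.1 - b.2)/2, (a.1 + a.2 - b.1 + b.2)/2), ?_, ?_, ?_⟩
    · simp only [square, Set.mem_prod, Set.mem_Icc]
      rcases abs_cases (a.1 - a.2 - x + y) with ⟨he, _⟩ | ⟨he, _⟩ <;>
      rcases abs_cases (b.1 - b.2 - x + y) with ⟨hf, _⟩ | ⟨hf, _⟩ <;>
      rw [he] at h <;>
      rcases h with h | h <;>
      exact ⟨⟨by linarith, by linarith⟩, by linarith, by linarith⟩
    · rw [show (a.1 + a.2 - b.1 + b.2)/2 - a.2 =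
        -((a.1 + a.2 + b.1 - b.2)/2 - a.1) by ring, abs_neg]
    · congr 1; ring
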